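/- Let l be a diffusion on L₂(X), 𝔄 = D(l) ∩ L_∞(X), and let h ∈ C_l, i.e. h is a positive quadratic form with 𝔄 ⊆ D(h), h ≤ λ · l|_𝔄 for some λ > 0, 𝔄 dense in D(h), and h|_𝔄 strongly local and Markovian. Then the relaxation h₀ of h is a regular Dirichlet form with D(l) ⊆ D(h₀), and every core for the form l is a core for h₀. -/

import Mathlib

open MeasureTheory Filter Topology ENNReal Set
open scoped NNReal
open scoped RealInnerProductSpace

noncomputable section

namespace SmallTime

variable {X : Type*} [MetricSpace X] [MeasurableSpace X] [BorelSpace X]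

/-- A symmetric, positive, densely defined quadratic form on `L₂(X,μ)`, represented by
its domain (a set of function representatives, stable under a.e. modification) together
with the associated bilinear map. -/
structure QuadForm (X : Type*) [MeasurableSpace X] (μ : Measure X) : Type _ where
  dom : Set (X → ℝ)
  B : (X → ℝ) → (X → ℝ) → ℝ
  dom_memLp : ∀ f ∈ dom, MemLp f 2 μ
  dom_congr : ∀ f ∈ dom, ∀ g : X → ℝ, f =ᵐ[μ] g → g ∈ dom
  B_congr : ∀ f g f' g' : X → ℝ, f =ᵐ[μ] f' → g =ᵐ[μ] g' → B f g = B f' g'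
  zero_mem : (0 : X → ℝ) ∈ dom
  add_mem : ∀ f ∈ dom, ∀ g ∈ dom, f + g ∈ dom
  smul_mem : ∀ (c : ℝ), ∀ f ∈ dom, c • f ∈ dom
  symm : ∀ f g : X → ℝ, B f g = B g f
  add_left : ∀ f ∈ dom, ∀ g ∈ dom, ∀ k ∈ dom, B (f + g) k = B f k + B g k
  smul_left : ∀ (c : ℝ), ∀ f ∈ dom, ∀ g ∈ dom, B (c • f) g = c * B f g
  nonneg : ∀ f ∈ dom, 0 ≤ B f f
  dense_dom : ∀ f : X → ℝ, MemLp f 2 μ → ∀ ε : ℝ, 0 < ε →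
    ∃ g ∈ dom, eLpNorm (f - g) 2 μ < ENNReal.ofReal ε

variable {μ : Measure X}

/-- The diagonal `E(f) = E(f,f)` of the form. -/
def QuadForm.Q (E : QuadForm X μ) (f : X → ℝ) : ℝ := E.B f f

/-- `f ∈ L_∞(X,μ)` (essentially bounded). -/
def MemLinf (μ : Measure X) (f : X → ℝ) : Prop := ∃ C : ℝ, ∀ᵐ x ∂μ, |f x| ≤ C

/-- The algebra `𝔄 = D(E) ∩ L_∞(X)`. -/
def QuadForm.Adom (E : QuadForm X μ) : Set (X → ℝ) := {f | f ∈ E.dom ∧ MemLinf μ f}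

/-- The form `E` is Markovian on the subset `S` of its domain: for every `ε > 0`
there is a Markovian cut-off `F` leaving `S` invariant and decreasing the form. -/
def MarkovianOn (E : QuadForm X μ) (S : Set (X → ℝ)) : Prop :=
  ∀ ε : ℝ, 0 < ε → ∃ F : ℝ → ℝ,
    (∀ t ∈ Icc (0:ℝ) 1, F t = t) ∧ (∀ t : ℝ, -ε ≤ F t ∧ F t ≤ 1 + ε) ∧
    (∀ s t : ℝ, s ≤ t → 0 ≤ F t - F s ∧ F t - F s ≤ t - s) ∧
    ∀ f ∈ S, (F ∘ f) ∈ S ∧ E.Q (F ∘ f) ≤ E.Q f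

/-- The form `E` is Markovian. -/
def Markovian (E : QuadForm X μ) : Prop := MarkovianOn E E.dom

/-- The form `E` is closed (completeness of the domain for the form norm). -/
def Closed (E : QuadForm X μ) : Prop :=
  ∀ (f : ℕ → X → ℝ) (g : X → ℝ), (∀ n, f n ∈ E.dom) → MemLp g 2 μ →
    Tendsto (fun n => eLpNorm (f n - g) 2 μ) atTop (𝓝 0) →
    (∀ ε : ℝ, 0 < ε → ∃ N : ℕ, ∀ m ≥ N, ∀ n ≥ N, E.Q (f m - f n) < ε) →
    g ∈ E.dom ∧ Tendsto (fun n => E.Q (f n - g)) atTop (𝓝 0)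

/-- Square of the natural form norm `φ ↦ (E(φ) + ‖φ‖₂²)^(1/2)`. -/
def QuadForm.formNormSq (E : QuadForm X μ) (f : X → ℝ) : ℝ :=
  E.Q f + ((eLpNorm f 2 μ).toReal) ^ 2

/-- `C` is a core of the form `E` (dense in the domain for the form norm). -/
def IsCore (E : QuadForm X μ) (C : Set (X → ℝ)) : Prop :=
  C ⊆ E.dom ∧ ∀ f ∈ E.dom, ∀ ε : ℝ, 0 < ε → ∃ g ∈ C, E.formNormSq (f - g) < ε

/-- The form `E` is regular: it has a core consisting of continuous compactly supported
functions which is moreover uniformly dense in `C₀(X)`. -/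
def Regular (E : QuadForm X μ) : Prop :=
  ∃ C : Set (X → ℝ), (∀ f ∈ C, Continuous f ∧ HasCompactSupport f) ∧ IsCore E C ∧
    ∀ f : X → ℝ, Continuous f → Tendsto f (cocompact X) (𝓝 0) →
      ∀ ε : ℝ, 0 < ε → ∃ g ∈ C, ∀ x, |f x - g x| ≤ ε

/-- `g` is constant on a neighbourhood of the support of `f`. -/
def ConstOnNhdOfSupport (f g : X → ℝ) : Prop :=
  ∃ (U : Set X) (c : ℝ), IsOpen U ∧ tsupport f ⊆ U ∧ ∀ x ∈ U, g x = c

/-- The form `E` is strongly local on the subset `S` of its domain. -/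
def StronglyLocalOn (E : QuadForm X μ) (S : Set (X → ℝ)) : Prop :=
  ∀ f ∈ S, ∀ g ∈ S, HasCompactSupport f → HasCompactSupport g →
    ConstOnNhdOfSupport f g → E.B g f = 0

/-- The form `E` is strongly local. -/
def StronglyLocal (E : QuadForm X μ) : Prop := StronglyLocalOn E E.dom

/-- A diffusion is a strongly local regular Dirichlet form (a Dirichlet form being a
closed Markovian form). -/
def IsDiffusion (E : QuadForm X μ) : Prop :=
  Closed E ∧ Markovian E ∧ Regular E ∧ StronglyLocal E

/-- The truncated form `I_ψ(φ) = E(ψφ,ψ) − 2⁻¹ E(ψ²,φ)`. -/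
def IFun (E : QuadForm X μ) (ψ φ : X → ℝ) : ℝ :=
  E.B (ψ * φ) ψ - (1/2) * E.B (ψ * ψ) φ

/-- The local domain `D(E)_loc`. -/
def locDom (E : QuadForm X μ) : Set (X → ℝ) :=
  {f | Measurable f ∧ ∀ K : Set X, IsCompact K → ∃ g ∈ E.dom, ∀ᵐ x ∂μ, x ∈ K → f x = g x}

/-- `g` is a bounded element of `D(E)` agreeing a.e. with `ψ` on the support of `φ`. -/
def IhatSpec (E : QuadForm X μ) (ψ φ g : X → ℝ) : Prop :=
  g ∈ E.dom ∧ MemLinf μ g ∧ ∀ᵐ x ∂μ, x ∈ tsupport φ → ψ x = g x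

open Classical in
/-- The localized truncated form `Î_ψ(φ) = I_ψ̂(φ)`, where `ψ̂ ∈ D(E) ∩ L_∞` agrees with
`ψ` on the support of `φ`. -/
def Ihat (E : QuadForm X μ) (ψ φ : X → ℝ) : ℝ :=
  if h : ∃ g : X → ℝ, IhatSpec E ψ φ g then IFun E h.choose φ else 0

/-- `|||Î_ψ||| ∈ [0,∞]`. -/
def Inorm (E : QuadForm X μ) (ψ : X → ℝ) : ℝ≥0∞ :=
  ⨆ (φ : X → ℝ) (_ : φ ∈ E.dom) (_ : MemLinf μ φ) (_ : HasCompactSupport φ)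
    (_ : eLpNorm φ 1 μ ≤ 1), ENNReal.ofReal |Ihat E ψ φ|

/-- `D₀(E) = {ψ ∈ D(E)_loc ∩ L_∞ : |||Î_ψ||| ≤ 1}`. -/
def D0 (E : QuadForm X μ) : Set (X → ℝ) :=
  {ψ | ψ ∈ locDom E ∧ MemLinf μ ψ ∧ Inorm E ψ ≤ 1}

/-- The set-theoretic distance
`d^{(E)}(A;B) = sup {d_ψ(A;B) : ψ ∈ D₀(E)} ∈ [0,∞]`, where
`d_ψ(A;B) = ess inf_A ψ − ess sup_B ψ` is the largest `M` with `ψ(x) − ψ(y) ≥ M`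
for a.e. `x ∈ A` and a.e. `y ∈ B`. -/
def formDist (E : QuadForm X μ) (A B : Set X) : ℝ≥0∞ :=
  ⨆ (ψ : X → ℝ) (_ : ψ ∈ D0 E) (M : ℝ≥0)
    (_ : ∀ᵐ x ∂μ.restrict A, ∀ᵐ y ∂μ.restrict B, (M : ℝ) ≤ ψ x - ψ y),
    (M : ℝ≥0∞)

/-- The pointwise pseudo-distance
`d^{(e)}(x;y) = sup {|ψ(x)−ψ(y)| : ψ ∈ D(l)_loc ∩ C_b(X), |||Î_ψ||| ≤ 1}`. -/
def de (l : QuadForm X μ) (x y : X) : ℝ≥0∞ :=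
  ⨆ (ψ : X → ℝ) (_ : ψ ∈ locDom l) (_ : Continuous ψ) (_ : ∃ C : ℝ, ∀ z, |ψ z| ≤ C)
    (_ : Inorm l ψ ≤ 1), ENNReal.ofReal |ψ x - ψ y|

/-- `d^{(e)}(A;B) = inf_{x ∈ A} inf_{y ∈ B} d^{(e)}(x;y)`. -/
def deSet (l : QuadForm X μ) (A B : Set X) : ℝ≥0∞ :=
  ⨅ (x ∈ A) (y ∈ B), de l x y

/-- Condition L: `d^{(e)}` is a metric inducing the topology of `X`, with relatively
compact balls. -/
def ConditionL (l : QuadForm X μ) : Prop :=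
  (∀ x y : X, de l x y ≠ ∞) ∧
  (∀ x y : X, de l x y = 0 ↔ x = y) ∧
  (∀ U : Set X, IsOpen U ↔ ∀ x ∈ U, ∃ ε : ℝ≥0∞, 0 < ε ∧ {y | de l x y < ε} ⊆ U) ∧
  (∀ (x : X) (r : ℝ), 0 < r → IsCompact (closure {y | de l x y < ENNReal.ofReal r}))

/-- `k ≤ h` as forms: `D(h) ⊆ D(k)` and `k(f) ≤ h(f)` for `f ∈ D(h)`. -/
def FormLE (k h : QuadForm X μ) : Prop :=
  h.dom ⊆ k.dom ∧ ∀ f ∈ h.dom, k.Q f ≤ h.Q f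

/-- `h₀` is the relaxation of `h`: the largest closed form majorized by `h`. -/
def IsRelaxation (h h₀ : QuadForm X μ) : Prop :=
  Closed h₀ ∧ FormLE h₀ h ∧ ∀ k : QuadForm X μ, Closed k → FormLE k h → FormLE k h₀

/-- `h ∈ C_l`: `𝔄 ⊆ D(h)`, `h ≤ λ l|_𝔄` for some `λ > 0`, `𝔄` dense in `D(h)`, and
`h|_𝔄` strongly local and Markovian. -/
def MemCl (l h : QuadForm X μ) : Prop :=
  l.Adom ⊆ h.dom ∧ (∃ lam : ℝ, 0 < lam ∧ ∀ f ∈ l.Adom, h.Q f ≤ lam * l.Q f) ∧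
  (∀ f ∈ h.dom, ∀ ε : ℝ, 0 < ε → ∃ g ∈ l.Adom, h.formNormSq (f - g) < ε) ∧
  StronglyLocalOn h l.Adom ∧ MarkovianOn h l.Adom

abbrev L2 (μ : Measure X) := Lp ℝ 2 μ

/-- `S` is the symmetric strongly continuous contraction semigroup generated by the
positive self-adjoint operator associated with the closed form `E`, characterized by
the standard variational formulas relating `E` to `t⁻¹(f − S_t f, f)`. -/
def IsAssociatedSemigroup (E : QuadForm X μ) (S : ℝ → L2 μ →L[ℝ] L2 μ) : Prop :=
  S 0 = ContinuousLinearMap.id ℝ (L2 μ) ∧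
  (∀ s t : ℝ, 0 ≤ s → 0 ≤ t → S (s + t) = (S s).comp (S t)) ∧
  (∀ t : ℝ, 0 ≤ t → ∀ f g : L2 μ, ⟪S t f, g⟫ = ⟪f, S t g⟫) ∧
  (∀ t : ℝ, 0 ≤ t → ‖S t‖ ≤ 1) ∧
  (∀ f : L2 μ, Tendsto (fun t => S t f) (𝓝[≥] (0:ℝ)) (𝓝 f)) ∧
  ∀ (f : X → ℝ) (hf : MemLp f 2 μ),
    (f ∈ E.dom ↔ ∃ C : ℝ, ∀ t : ℝ, 0 < t →
        t⁻¹ * ⟪hf.toLp - S t hf.toLp, hf.toLp⟫ ≤ C) ∧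
    (f ∈ E.dom → Tendsto (fun t : ℝ => t⁻¹ * ⟪hf.toLp - S t hf.toLp, hf.toLp⟫)
        (𝓝[>] (0:ℝ)) (𝓝 (E.Q f)))

/-- `f ∈ L₂(A)`: `f` vanishes a.e. outside `A`. -/
def MemL2On (μ : Measure X) (A : Set X) (f : L2 μ) : Prop :=
  ∀ᵐ x ∂μ, x ∉ A → (f : X → ℝ) x = 0

/-- `e^{-a}` for `a ∈ [0,∞]`, with the convention `e^{-∞} = 0`. -/
def expNegENN (a : ℝ≥0∞) : ℝ := if a = ∞ then 0 else Real.exp (-a.toReal)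

/-- Extended-real logarithm, with `log x = -∞` for `x ≤ 0`. -/
def elog (x : ℝ) : EReal := if x ≤ 0 then (⊥ : EReal) else ((Real.log x : ℝ) : EReal)

/-- `-4⁻¹ d²` as an extended real (`= -∞` when `d = ∞`). -/
def negQuarterSq (d : ℝ≥0∞) : EReal :=
  ((-(1/4 : ℝ) : ℝ) : EReal) * ((d ^ 2 : ℝ≥0∞) : EReal)

/-- The indicator function `𝟙_A` as an element of `L₂`. -/
def indL2 (μ : Measure X) (A : Set X) (hA : MeasurableSet A) (h : μ A ≠ ∞) : L2 μ :=
  indicatorConstLp 2 hA h (1 : ℝ)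

/-- `lim_{t↓0} t log (iA, S_t iB) = −4⁻¹ d²`. -/
def SmallTimeLimit {μ : Measure X} (S : ℝ → L2 μ →L[ℝ] L2 μ) (iA iB : L2 μ)
    (d : ℝ≥0∞) : Prop :=
  Tendsto (fun t : ℝ => ((t : ℝ) : EReal) * elog ⟪iA, S t iB⟫) (𝓝[>] (0:ℝ))
    (𝓝 (negQuarterSq d))

/-- `u = (I + H)⁻¹ f` for the operator `H` associated with the form `E`. -/
def IsResolventAt (E : QuadForm X μ) (f u : X → ℝ) : Prop :=
  u ∈ E.dom ∧ ∀ v ∈ E.dom, E.B u v + ∫ x, u x * v x ∂μ = ∫ x, f x * v x ∂μ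

/-- `E = r.lim_{ε↓0} F(ε)`: strong resolvent convergence as `ε ↓ 0`. -/
def RLimAt0 (F : ℝ → QuadForm X μ) (E : QuadForm X μ) : Prop :=
  ∀ (f u : X → ℝ), MemLp f 2 μ → IsResolventAt E f u →
    ∀ U : ℝ → X → ℝ, (∀ ε : ℝ, 0 < ε → IsResolventAt (F ε) f (U ε)) →
    Tendsto (fun ε => eLpNorm (fun x => U ε x - u x) 2 μ) (𝓝[>] (0:ℝ)) (𝓝 0)

/-- `C t = cos(t H^{1/2})` for the positive self-adjoint operator `H` associated with
the closed form `E`, characterized by the cosine functional equations together with the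
Gaussian transform relation to the associated semigroup. -/
def IsCosineFamily (E : QuadForm X μ) (C : ℝ → L2 μ →L[ℝ] L2 μ) : Prop :=
  C 0 = ContinuousLinearMap.id ℝ (L2 μ) ∧
  (∀ t : ℝ, C (-t) = C t) ∧
  (∀ s t : ℝ, C (s + t) + C (s - t) = (2 : ℝ) • ((C s).comp (C t))) ∧
  (∀ t : ℝ, ‖C t‖ ≤ 1) ∧
  (∀ (t : ℝ) (f g : L2 μ), ⟪C t f, g⟫ = ⟪f, C t g⟫) ∧
  (∀ f : L2 μ, Continuous fun t : ℝ => C t f) ∧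
  ∀ S : ℝ → L2 μ →L[ℝ] L2 μ, IsAssociatedSemigroup E S → ∀ t : ℝ, 0 < t → ∀ f g : L2 μ,
    ⟪g, S t f⟫ = (Real.pi * t) ^ (-(1/2) : ℝ) *
      ∫ s in Ioi (0:ℝ), Real.exp (-(s^2) / (4*t)) * ⟪g, C s f⟫

/-- `P` is the orthogonal projection of `L₂(X)` onto `L₂(A)` (multiplication by `𝟙_A`). -/
def IsIndicatorProjection (μ : Measure X) (A : Set X) (P : L2 μ →L[ℝ] L2 μ) : Prop :=
  ∀ f : L2 μ, (P f : X → ℝ) =ᵐ[μ] A.indicator (f : X → ℝ)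

/-- `kv = k + v` where `v` is the form of multiplication by `V ≥ 0`. -/
def IsSumWithMult (V : X → ℝ) (k kv : QuadForm X μ) : Prop :=
  kv.dom = {f | f ∈ k.dom ∧ Integrable (fun x => V x * (f x)^2) μ} ∧
  ∀ f ∈ kv.dom, kv.Q f = k.Q f + ∫ x, V x * (f x)^2 ∂μ

/-!
The relaxation `h₀` of `h` is the lower semicontinuous envelope of `h` in `L²`: the envelope is a
closed form below `h`, hence below `h₀`, and a closed form coincides with its own envelope.
Recovery sequences for the envelope are Cauchy in form by the parallelogram law, so every core of
`h`, in particular `𝔄`, is a core of `h₀`, and the Markov cut-offs, which contract `L²` distances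
and do not increase `h` on `𝔄`, pass to `h₀`. As `𝔄` is a core of `l` on which
`h₀ ≤ h ≤ λ l`, closedness of `h₀` gives `D(l) ⊆ D(h₀)` with `h₀ ≤ λ l` there; hence cores of
`l` are cores of `h₀`, and regularity of `l` passes to `h₀`.
-/

section FormAlgebra

variable {α : Type*} [MeasurableSpace α] {μ : Measure α}

namespace QuadForm

variable (E : QuadForm α μ) {f g : α → ℝ}

theorem neg_mem (hf : f ∈ E.dom) : -f ∈ E.dom := by
  simpa using E.smul_mem (-1) f hf

theorem sub_mem (hf : f ∈ E.dom) (hg : g ∈ E.dom) : f - g ∈ E.dom := by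
  simpa [sub_eq_add_neg] using E.add_mem f hf (-g) (E.neg_mem hg)

theorem Q_nonneg (hf : f ∈ E.dom) : 0 ≤ E.Q f := E.nonneg f hf

theorem B_add_right {k : α → ℝ} (hf : f ∈ E.dom) (hg : g ∈ E.dom) (hk : k ∈ E.dom) :
    E.B k (f + g) = E.B k f + E.B k g := by
  rw [E.symm k, E.add_left f hf g hg k hk, E.symm f, E.symm g]

theorem B_smul_right (c : ℝ) (hf : f ∈ E.dom) (hg : g ∈ E.dom) :
    E.B g (c • f) = c * E.B g f := by
  rw [E.symm g, E.smul_left c f hf g hg, E.symm f]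

theorem Q_zero : E.Q 0 = 0 := by
  simpa [QuadForm.Q] using E.smul_left 0 0 E.zero_mem 0 E.zero_mem

theorem Q_add (hf : f ∈ E.dom) (hg : g ∈ E.dom) :
    E.Q (f + g) = E.Q f + 2 * E.B f g + E.Q g := by
  unfold QuadForm.Q
  rw [E.add_left f hf g hg _ (E.add_mem f hf g hg), E.B_add_right hf hg hf,
    E.B_add_right hf hg hg, E.symm g f]
  ring

theorem Q_smul (c : ℝ) (hf : f ∈ E.dom) : E.Q (c • f) = c ^ 2 * E.Q f := by
  unfold QuadForm.Q
  rw [E.smul_left c f hf _ (E.smul_mem c f hf), E.B_smul_right c hf hf]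
  ring

theorem Q_neg (hf : f ∈ E.dom) : E.Q (-f) = E.Q f := by
  simpa using E.Q_smul (-1) hf

theorem Q_sub (hf : f ∈ E.dom) (hg : g ∈ E.dom) :
    E.Q (f - g) = E.Q f - 2 * E.B f g + E.Q g := by
  rw [sub_eq_add_neg, E.Q_add hf (E.neg_mem hg), E.Q_neg hg, ← neg_one_smul ℝ g,
    E.B_smul_right (-1) hg hf]
  ring

theorem Q_sub_comm (hf : f ∈ E.dom) (hg : g ∈ E.dom) : E.Q (f - g) = E.Q (g - f) := by
  rw [E.Q_sub hf hg, E.Q_sub hg hf, E.symm g f]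
  ring

theorem Q_add_add_Q_sub (hf : f ∈ E.dom) (hg : g ∈ E.dom) :
    E.Q (f + g) + E.Q (f - g) = 2 * E.Q f + 2 * E.Q g := by
  rw [E.Q_add hf hg, E.Q_sub hf hg]
  ring

theorem Q_add_le (hf : f ∈ E.dom) (hg : g ∈ E.dom) :
    E.Q (f + g) ≤ 2 * E.Q f + 2 * E.Q g := by
  linarith [E.Q_add_add_Q_sub hf hg, E.Q_nonneg (E.sub_mem hf hg)]

theorem B_sq_le (hf : f ∈ E.dom) (hg : g ∈ E.dom) : E.B f g ^ 2 ≤ E.Q f * E.Q g := by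
  have hquad : ∀ t : ℝ, 0 ≤ E.Q g * (t * t) + 2 * E.B f g * t + E.Q f := fun t => by
    have := E.Q_nonneg (E.add_mem f hf _ (E.smul_mem t g hg))
    rw [E.Q_add hf (E.smul_mem t g hg), E.B_smul_right t hg hf, E.Q_smul t hg] at this
    linarith
  have := discrim_le_zero hquad
  unfold discrim at this
  nlinarith

theorem abs_B_le (hf : f ∈ E.dom) (hg : g ∈ E.dom) :
    |E.B f g| ≤ √(E.Q f) * √(E.Q g) := by
  rw [← Real.sqrt_mul (E.Q_nonneg hf), ← Real.sqrt_sq_eq_abs]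
  exact Real.sqrt_le_sqrt (E.B_sq_le hf hg)

theorem tendsto_Q {a : ℕ → α → ℝ} (ha : ∀ n, a n ∈ E.dom) (hf : f ∈ E.dom)
    (h : Tendsto (fun n => E.Q (a n - f)) atTop (𝓝 0)) :
    Tendsto (fun n => E.Q (a n)) atTop (𝓝 (E.Q f)) := by
  have hbound : ∀ n, |E.Q (a n) - E.Q f| ≤ 2 * √(E.Q f) * √(E.Q (a n - f)) + E.Q (a n - f) :=
    fun n => by
      have hd := E.sub_mem (ha n) hf
      have hsplit : E.Q (a n) - E.Q f = 2 * E.B f (a n - f) + E.Q (a n - f) := by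
        have := E.Q_add hf hd
        rw [add_sub_cancel] at this
        linarith
      rw [hsplit]
      calc |2 * E.B f (a n - f) + E.Q (a n - f)|
          ≤ |2 * E.B f (a n - f)| + |E.Q (a n - f)| := abs_add_le _ _
        _ = 2 * |E.B f (a n - f)| + E.Q (a n - f) := by
            rw [abs_mul, abs_two, abs_of_nonneg (E.Q_nonneg hd)]
        _ ≤ _ := by nlinarith [E.abs_B_le hf hd]
  have hlim : Tendsto (fun n => 2 * √(E.Q f) * √(E.Q (a n - f)) + E.Q (a n - f)) atTop (𝓝 0) := by
    simpa using (h.sqrt.const_mul (2 * √(E.Q f))).add h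
  simpa using (squeeze_zero_norm hbound hlim).add_const (E.Q f)

end QuadForm

/-- `‖f‖₂` as a real number, with the junk value `0` when `f ∉ L²`. -/
def l2Norm (μ : Measure α) (f : α → ℝ) : ℝ := (eLpNorm f 2 μ).toReal

theorem l2Norm_neg (f : α → ℝ) : l2Norm μ (-f) = l2Norm μ f := by
  simp [l2Norm, eLpNorm_neg]

theorem l2Norm_sub_comm (f g : α → ℝ) : l2Norm μ (f - g) = l2Norm μ (g - f) := by
  rw [← l2Norm_neg, neg_sub]

theorem l2Norm_smul (c : ℝ) (f : α → ℝ) : l2Norm μ (c • f) = |c| * l2Norm μ f := by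
  simp [l2Norm, eLpNorm_const_smul, ENNReal.toReal_mul]

theorem l2Norm_congr {f g : α → ℝ} (h : f =ᵐ[μ] g) : l2Norm μ f = l2Norm μ g := by
  rw [l2Norm, l2Norm, eLpNorm_congr_ae h]

theorem l2Norm_add_le {f g : α → ℝ} (hf : MemLp f 2 μ) (hg : MemLp g 2 μ) :
    l2Norm μ (f + g) ≤ l2Norm μ f + l2Norm μ g := by
  rw [l2Norm, l2Norm, l2Norm, ← ENNReal.toReal_add hf.eLpNorm_ne_top hg.eLpNorm_ne_top]
  exact ENNReal.toReal_mono (ENNReal.add_ne_top.2 ⟨hf.eLpNorm_ne_top, hg.eLpNorm_ne_top⟩)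
    (eLpNorm_add_le hf.aestronglyMeasurable hg.aestronglyMeasurable one_le_two)

theorem l2Norm_sub_le {f g k : α → ℝ} (hf : MemLp f 2 μ) (hg : MemLp g 2 μ) (hk : MemLp k 2 μ) :
    l2Norm μ (f - k) ≤ l2Norm μ (f - g) + l2Norm μ (g - k) := by
  simpa using l2Norm_add_le (hf.sub hg) (hg.sub hk)

theorem eventually_l2Norm_lt {u : ℕ → α → ℝ}
    (h : Tendsto (fun n => eLpNorm (u n) 2 μ) atTop (𝓝 0)) {δ : ℝ} (hδ : 0 < δ) :
    ∀ᶠ n in atTop, l2Norm μ (u n) < δ :=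
  ((tendsto_order.1 h).2 _ (ENNReal.ofReal_pos.2 hδ)).mono fun _ hn =>
    ENNReal.toReal_lt_of_lt_ofReal hn

theorem tendsto_eLpNorm_of_l2Norm {u : ℕ → α → ℝ} (hu : ∀ n, MemLp (u n) 2 μ)
    (h : Tendsto (fun n => l2Norm μ (u n)) atTop (𝓝 0)) :
    Tendsto (fun n => eLpNorm (u n) 2 μ) atTop (𝓝 0) := by
  have := ENNReal.tendsto_ofReal h
  simp only [ENNReal.ofReal_zero, l2Norm, ENNReal.ofReal_toReal (hu _).eLpNorm_ne_top] at this
  exact this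

theorem QuadForm.formNormSq_add_le (E : QuadForm α μ) {f g : α → ℝ} (hf : f ∈ E.dom)
    (hg : g ∈ E.dom) : E.formNormSq (f + g) ≤ 2 * E.formNormSq f + 2 * E.formNormSq g := by
  have hn := l2Norm_add_le (E.dom_memLp f hf) (E.dom_memLp g hg)
  have hn0 : 0 ≤ l2Norm μ (f + g) := ENNReal.toReal_nonneg
  change E.Q (f + g) + l2Norm μ (f + g) ^ 2 ≤
    2 * (E.Q f + l2Norm μ f ^ 2) + 2 * (E.Q g + l2Norm μ g ^ 2)
  nlinarith [E.Q_add_le hf hg, sq_nonneg (l2Norm μ f - l2Norm μ g)]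

end FormAlgebra

section Envelope

variable {α : Type*} [MeasurableSpace α] {μ : Measure α} (h : QuadForm α μ) {f g : α → ℝ}

/-- The numbers `c` such that `f` is an `L²`-limit of elements `a ∈ D(h)` with
`h(a) < c + o(1)`; their infimum is the lower semicontinuous envelope of `h` at `f`. -/
def relaxSet (f : α → ℝ) : Set ℝ :=
  {c | ∀ δ : ℝ, 0 < δ → ∃ a ∈ h.dom, l2Norm μ (f - a) < δ ∧ h.Q a < c + δ}

def relaxDom : Set (α → ℝ) := {f | MemLp f 2 μ ∧ (relaxSet h f).Nonempty}

def relaxVal (f : α → ℝ) : ℝ := sInf (relaxSet h f)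

theorem nonneg_of_mem_relaxSet {c : ℝ} (hc : c ∈ relaxSet h f) : 0 ≤ c := by
  by_contra hneg
  obtain ⟨a, ha, -, hQa⟩ := hc (-c) (by linarith)
  linarith [h.Q_nonneg ha]

theorem bddBelow_relaxSet : BddBelow (relaxSet h f) :=
  ⟨0, fun _ hc => nonneg_of_mem_relaxSet h hc⟩

theorem relaxVal_nonneg : 0 ≤ relaxVal h f :=
  Real.sInf_nonneg fun _ hc => nonneg_of_mem_relaxSet h hc

theorem relaxVal_le_of_mem {c : ℝ} (hc : c ∈ relaxSet h f) : relaxVal h f ≤ c :=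
  csInf_le (bddBelow_relaxSet h) hc

theorem relaxVal_mem_relaxSet (hf : (relaxSet h f).Nonempty) : relaxVal h f ∈ relaxSet h f := by
  intro δ hδ
  obtain ⟨c, hc, hlt⟩ := Real.lt_sInf_add_pos hf (half_pos hδ)
  obtain ⟨a, ha, hfa, hQa⟩ := hc (δ / 2) (half_pos hδ)
  exact ⟨a, ha, by linarith, by rw [relaxVal]; linarith⟩

theorem exists_relaxVal_le_Q_add (f : α → ℝ) {ε : ℝ} (hε : 0 < ε) :
    ∃ δ > 0, ∀ a ∈ h.dom, l2Norm μ (f - a) < δ → relaxVal h f ≤ h.Q a + ε := by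
  by_contra hcon
  push Not at hcon
  have hmem : relaxVal h f - ε ∈ relaxSet h f := fun δ hδ => by
    obtain ⟨a, ha, hfa, hQa⟩ := hcon δ hδ
    exact ⟨a, ha, hfa, by linarith⟩
  linarith [relaxVal_le_of_mem h hmem]

theorem Q_mem_relaxSet (hf : f ∈ h.dom) : h.Q f ∈ relaxSet h f :=
  fun δ hδ => ⟨f, hf, by simpa [l2Norm] using hδ, by linarith⟩

theorem dom_subset_relaxDom : h.dom ⊆ relaxDom h :=
  fun _ hf => ⟨h.dom_memLp _ hf, _, Q_mem_relaxSet h hf⟩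

theorem relaxVal_le_Q (hf : f ∈ h.dom) : relaxVal h f ≤ h.Q f :=
  relaxVal_le_of_mem h (Q_mem_relaxSet h hf)

theorem relaxVal_zero : relaxVal h 0 = 0 :=
  le_antisymm ((relaxVal_le_Q h h.zero_mem).trans_eq h.Q_zero) (relaxVal_nonneg h)

theorem relaxSet_congr (hfg : f =ᵐ[μ] g) : relaxSet h f = relaxSet h g := by
  have key : ∀ {f g : α → ℝ}, f =ᵐ[μ] g → relaxSet h f ⊆ relaxSet h g :=
    fun hfg c hc δ hδ => by
      obtain ⟨a, ha, hfa, hQa⟩ := hc δ hδ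
      exact ⟨a, ha, by rwa [← l2Norm_congr (hfg.sub (EventuallyEq.refl _ a))], hQa⟩
  exact (key hfg).antisymm (key hfg.symm)

theorem relaxSet_neg : relaxSet h (-f) = relaxSet h f := by
  have key : ∀ f : α → ℝ, relaxSet h f ⊆ relaxSet h (-f) := fun f c hc δ hδ => by
    obtain ⟨a, ha, hfa, hQa⟩ := hc δ hδ
    refine ⟨-a, h.neg_mem ha, ?_, by rwa [h.Q_neg ha]⟩
    rwa [← neg_sub', l2Norm_neg]
  exact (neg_neg f ▸ key (-f)).antisymm (key f)

theorem add_mem_relaxSet {c d : ℝ} (hc : c ∈ relaxSet h f) (hd : d ∈ relaxSet h g)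
    (hf : MemLp f 2 μ) (hg : MemLp g 2 μ) : 2 * c + 2 * d ∈ relaxSet h (f + g) := by
  intro δ hδ
  obtain ⟨a, ha, hfa, hQa⟩ := hc (δ / 4) (by positivity)
  obtain ⟨b, hb, hgb, hQb⟩ := hd (δ / 4) (by positivity)
  refine ⟨a + b, h.add_mem a ha b hb, ?_, by linarith [h.Q_add_le ha hb]⟩
  rw [add_sub_add_comm]
  linarith [l2Norm_add_le (hf.sub (h.dom_memLp a ha)) (hg.sub (h.dom_memLp b hb))]

theorem smul_mem_relaxSet {c : ℝ} (hc : c ∈ relaxSet h f) (t : ℝ) :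
    t ^ 2 * c ∈ relaxSet h (t • f) := by
  intro δ hδ
  set K := t ^ 2 + |t| + 1
  have hK : 0 < K := by positivity
  obtain ⟨a, ha, hfa, hQa⟩ := hc (δ / K) (by positivity)
  have hKδ : K * (δ / K) = δ := mul_div_cancel₀ _ hK.ne'
  have hδK : 0 < δ / K := by positivity
  refine ⟨t • a, h.smul_mem t a ha, ?_, ?_⟩
  · rw [← smul_sub, l2Norm_smul]
    calc |t| * l2Norm μ (f - a) ≤ |t| * (δ / K) := by gcongr
      _ < K * (δ / K) := by gcongr; simp only [K]; nlinarith [sq_nonneg t]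
      _ = δ := hKδ
  · rw [h.Q_smul t ha]
    calc t ^ 2 * h.Q a ≤ t ^ 2 * (c + δ / K) := by gcongr
      _ < t ^ 2 * c + K * (δ / K) := by simp only [K]; nlinarith [abs_nonneg t]
      _ = t ^ 2 * c + δ := by rw [hKδ]

theorem relaxDom_add (hf : f ∈ relaxDom h) (hg : g ∈ relaxDom h) : f + g ∈ relaxDom h :=
  ⟨hf.1.add hg.1, _, add_mem_relaxSet h hf.2.some_mem hg.2.some_mem hf.1 hg.1⟩

theorem relaxDom_smul (hf : f ∈ relaxDom h) (t : ℝ) : t • f ∈ relaxDom h :=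
  ⟨hf.1.const_smul t, _, smul_mem_relaxSet h hf.2.some_mem t⟩

theorem relaxDom_sub (hf : f ∈ relaxDom h) (hg : g ∈ relaxDom h) : f - g ∈ relaxDom h := by
  simpa [sub_eq_add_neg] using relaxDom_add h hf (relaxDom_smul h hg (-1))

theorem relaxVal_neg (f : α → ℝ) : relaxVal h (-f) = relaxVal h f := by
  rw [relaxVal, relaxSet_neg, relaxVal]

theorem relaxVal_smul (hf : f ∈ relaxDom h) (t : ℝ) :
    relaxVal h (t • f) = t ^ 2 * relaxVal h f := by
  have hle : ∀ {g : α → ℝ}, g ∈ relaxDom h → ∀ s : ℝ, relaxVal h (s • g) ≤ s ^ 2 * relaxVal h g :=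
    fun hg s => relaxVal_le_of_mem h (smul_mem_relaxSet h (relaxVal_mem_relaxSet h hg.2) s)
  refine (hle hf t).antisymm ?_
  rcases eq_or_ne t 0 with rfl | ht
  · simp [relaxVal_nonneg]
  · have := hle (relaxDom_smul h hf t) t⁻¹
    rw [smul_smul, inv_mul_cancel₀ ht, one_smul] at this
    have ht2 : 0 < t ^ 2 := by positivity
    calc t ^ 2 * relaxVal h f ≤ t ^ 2 * (t⁻¹ ^ 2 * relaxVal h (t • f)) := by gcongr
      _ = relaxVal h (t • f) := by field_simp

end Envelope

theorem AddMonoidHom.apply_eq_mul_of_bounded (φ : ℝ →+ ℝ) {K : ℝ}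
    (hK : ∀ t : ℝ, |t| ≤ 1 → |φ t| ≤ K) (t : ℝ) : φ t = t * φ 1 := by
  have hcont : Continuous φ := by
    refine continuous_of_continuousAt_zero φ (Metric.continuousAt_iff.2 fun ε hε => ?_)
    -- `|φ s| = |φ ((n + 1) • s)| / (n + 1) ≤ K / (n + 1)` when `|s| < 1 / (n + 1)`
    obtain ⟨n, hn⟩ := exists_nat_gt (K / ε)
    have hn0 : (0 : ℝ) < n + 1 := by positivity
    refine ⟨1 / (n + 1), by positivity, fun {s} hs => ?_⟩
    rw [dist_zero_right, Real.norm_eq_abs] at hs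
    have hbound := hK ((n + 1 : ℕ) • s) (by
      rw [nsmul_eq_mul, abs_mul, Nat.abs_cast]
      push_cast
      rw [lt_div_iff₀ hn0] at hs
      linarith)
    rw [map_nsmul, nsmul_eq_mul, abs_mul, Nat.abs_cast] at hbound
    push_cast at hbound
    rw [map_zero, dist_zero_right, Real.norm_eq_abs]
    rw [div_lt_iff₀ hε] at hn
    nlinarith [abs_nonneg (φ s)]
  simpa using map_real_smul φ hcont t 1

section Polarization

variable {α : Type*} [MeasurableSpace α] {μ : Measure α} (h : QuadForm α μ) {x y : α → ℝ}

theorem relaxVal_add_add_relaxVal_sub_le (hx : x ∈ relaxDom h) (hy : y ∈ relaxDom h) :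
    relaxVal h (x + y) + relaxVal h (x - y) ≤ 2 * relaxVal h x + 2 * relaxVal h y := by
  refine _root_.le_of_forall_pos_le_add fun ε hε => ?_
  obtain ⟨δ₁, hδ₁, hsum⟩ := exists_relaxVal_le_Q_add h (x + y) (by positivity : 0 < ε / 6)
  obtain ⟨δ₂, hδ₂, hdiff⟩ := exists_relaxVal_le_Q_add h (x - y) (by positivity : 0 < ε / 6)
  set δ := min (min δ₁ δ₂ / 2) (ε / 6)
  have hδ : 0 < δ := by positivity
  have hδ₁' : δ ≤ δ₁ / 2 := (min_le_left _ _).trans (by gcongr; exact min_le_left _ _)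
  have hδ₂' : δ ≤ δ₂ / 2 := (min_le_left _ _).trans (by gcongr; exact min_le_right _ _)
  have hδε : δ ≤ ε / 6 := min_le_right _ _
  obtain ⟨a, ha, hxa, hQa⟩ := relaxVal_mem_relaxSet h hx.2 δ hδ
  obtain ⟨b, hb, hyb, hQb⟩ := relaxVal_mem_relaxSet h hy.2 δ hδ
  have hxa' := hx.1.sub (h.dom_memLp a ha)
  have hyb' := hy.1.sub (h.dom_memLp b hb)
  have h₁ := hsum (a + b) (h.add_mem a ha b hb) (by
    rw [add_sub_add_comm]; linarith [l2Norm_add_le hxa' hyb'])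
  have h₂ := hdiff (a - b) (h.sub_mem ha hb) (by
    have := l2Norm_add_le hxa' hyb'.neg
    rw [l2Norm_neg, ← sub_eq_add_neg, ← sub_sub_sub_comm] at this
    linarith)
  linarith [h.Q_add_add_Q_sub ha hb]

theorem relaxVal_add_add_relaxVal_sub (hx : x ∈ relaxDom h) (hy : y ∈ relaxDom h) :
    relaxVal h (x + y) + relaxVal h (x - y) = 2 * relaxVal h x + 2 * relaxVal h y := by
  refine (relaxVal_add_add_relaxVal_sub_le h hx hy).antisymm ?_
  have := relaxVal_add_add_relaxVal_sub_le h (relaxDom_add h hx hy) (relaxDom_sub h hx hy)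
  rw [add_add_sub_cancel, add_sub_sub_cancel, ← two_smul ℝ x, ← two_smul ℝ y,
    relaxVal_smul h hx, relaxVal_smul h hy] at this
  linarith

def relaxB (f g : α → ℝ) : ℝ := (relaxVal h (f + g) - relaxVal h (f - g)) / 4

theorem relaxB_add_left {u u' v : α → ℝ} (hu : u ∈ relaxDom h) (hu' : u' ∈ relaxDom h)
    (hv : v ∈ relaxDom h) : relaxB h (u + u') v = relaxB h u v + relaxB h u' v := by
  have p₁ := relaxVal_add_add_relaxVal_sub h (relaxDom_add h hu hv) hu'
  have p₂ := relaxVal_add_add_relaxVal_sub h (relaxDom_sub h hu hv) hu'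
  have p₃ := relaxVal_add_add_relaxVal_sub h (relaxDom_add h hu' hv) hu
  have p₄ := relaxVal_add_add_relaxVal_sub h (relaxDom_sub h hu' hv) hu
  have e₁ : u + v + u' = u + u' + v := by abel
  have e₂ : u - v + u' = u + u' - v := by abel
  have e₃ : u' + v + u = u + u' + v := by abel
  have e₄ : u' - v + u = u + u' - v := by abel
  have e₅ : u + v - u' = -(u' - v - u) := by abel
  have e₆ : u - v - u' = -(u' + v - u) := by abel
  rw [e₁, e₅, relaxVal_neg] at p₁
  rw [e₂, e₆, relaxVal_neg] at p₂
  rw [e₃] at p₃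
  rw [e₄] at p₄
  unfold relaxB
  linarith

theorem abs_relaxB_le (hx : x ∈ relaxDom h) (hy : y ∈ relaxDom h) :
    |relaxB h x y| ≤ (relaxVal h x + relaxVal h y) / 2 := by
  have := relaxVal_add_add_relaxVal_sub h hx hy
  have h₁ := relaxVal_nonneg h (f := x + y)
  have h₂ := relaxVal_nonneg h (f := x - y)
  rw [relaxB, abs_le]
  constructor <;> linarith

theorem relaxB_smul_left (c : ℝ) (hx : x ∈ relaxDom h) (hy : y ∈ relaxDom h) :
    relaxB h (c • x) y = c * relaxB h x y := by
  let φ : ℝ →+ ℝ := AddMonoidHom.mk' (fun t => relaxB h (t • x) y) fun s t => by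
    simp only [add_smul]
    exact relaxB_add_left h (relaxDom_smul h hx s) (relaxDom_smul h hx t) hy
  have hφ : ∀ t : ℝ, |t| ≤ 1 → |φ t| ≤ (relaxVal h x + relaxVal h y) / 2 := fun t ht => by
    refine (abs_relaxB_le h (relaxDom_smul h hx t) hy).trans ?_
    rw [relaxVal_smul h hx]
    have : t ^ 2 ≤ 1 := by nlinarith [abs_nonneg t, sq_abs t]
    nlinarith [relaxVal_nonneg h (f := x)]
  simpa [φ] using AddMonoidHom.apply_eq_mul_of_bounded φ hφ c

theorem relaxB_self (hx : x ∈ relaxDom h) : relaxB h x x = relaxVal h x := by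
  rw [relaxB, sub_self, relaxVal_zero, ← two_smul ℝ x, relaxVal_smul h hx]
  ring

def relaxForm : QuadForm α μ where
  dom := relaxDom h
  B := relaxB h
  dom_memLp _ hf := hf.1
  dom_congr _ hf _ hfg := ⟨hf.1.ae_eq hfg, relaxSet_congr h hfg ▸ hf.2⟩
  B_congr _ _ _ _ hf hg := by
    rw [relaxB, relaxB, relaxVal, relaxVal, relaxSet_congr h (hf.add hg),
      relaxSet_congr h (hf.sub hg), relaxVal, relaxVal]
  zero_mem := dom_subset_relaxDom h h.zero_mem
  add_mem _ hf _ hg := relaxDom_add h hf hg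
  smul_mem c _ hf := relaxDom_smul h hf c
  symm f g := by rw [relaxB, relaxB, add_comm f g, ← relaxVal_neg h (f - g), neg_sub]
  add_left _ hf _ hg _ hk := relaxB_add_left h hf hg hk
  smul_left c _ hf _ hg := relaxB_smul_left h c hf hg
  nonneg _ hf := (relaxB_self h hf).symm ▸ relaxVal_nonneg h
  dense_dom f hf ε hε := by
    obtain ⟨g, hg, hfg⟩ := h.dense_dom f hf ε hε
    exact ⟨g, dom_subset_relaxDom h hg, hfg⟩

theorem relaxForm_Q (hx : x ∈ relaxDom h) : (relaxForm h).Q x = relaxVal h x :=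
  relaxB_self h hx

end Polarization


section Relaxation

variable {α : Type*} [MeasurableSpace α] {μ : Measure α} {h k E : QuadForm α μ} {x : α → ℝ}

theorem relaxVal_le_of_tendsto {u : ℕ → α → ℝ} {c : ℝ} (hu : ∀ n, u n ∈ relaxDom h)
    (hx : MemLp x 2 μ) (hL2 : Tendsto (fun n => eLpNorm (u n - x) 2 μ) atTop (𝓝 0))
    (hle : ∀ ε > 0, ∀ᶠ n in atTop, relaxVal h (u n) < c + ε) :
    x ∈ relaxDom h ∧ relaxVal h x ≤ c := by
  have hc : c ∈ relaxSet h x := fun δ hδ => by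
    obtain ⟨n, hxn, hn⟩ :=
      ((eventually_l2Norm_lt hL2 (half_pos hδ)).and (hle (δ / 2) (half_pos hδ))).exists
    obtain ⟨a, ha, hua, hQa⟩ := relaxVal_mem_relaxSet h (hu n).2 (δ / 2) (half_pos hδ)
    refine ⟨a, ha, ?_, by linarith⟩
    have := l2Norm_sub_le hx (hu n).1 (h.dom_memLp a ha)
    rw [l2Norm_sub_comm x (u n)] at this
    linarith
  exact ⟨⟨hx, c, hc⟩, relaxVal_le_of_mem h hc⟩

variable (h) in
theorem relaxForm_closed : Closed (relaxForm h) := by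
  intro u g hu hg hL2 hC
  have hsmall : ∀ ε > 0, ∃ N, ∀ n ≥ N, g - u n ∈ relaxDom h ∧ relaxVal h (g - u n) ≤ ε := by
    intro ε hε
    obtain ⟨N, hN⟩ := hC ε hε
    refine ⟨N, fun n hn => relaxVal_le_of_tendsto (fun m => relaxDom_sub h (hu m) (hu n))
      (hg.sub (hu n).1) (by simpa only [sub_sub_sub_cancel_right] using hL2) fun ε' hε' => ?_⟩
    filter_upwards [eventually_ge_atTop N] with m hm
    rw [← relaxForm_Q h (relaxDom_sub h (hu m) (hu n))]
    linarith [hN m hm n hn]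
  obtain ⟨N, hN⟩ := hsmall 1 one_pos
  have hg' : g ∈ relaxDom h := by simpa using relaxDom_add h (hN N le_rfl).1 (hu N)
  refine ⟨hg', Metric.tendsto_atTop.2 fun ε hε => ?_⟩
  obtain ⟨N, hN⟩ := hsmall (ε / 2) (half_pos hε)
  refine ⟨N, fun n hn => ?_⟩
  rw [Real.dist_eq, sub_zero, relaxForm_Q h (relaxDom_sub h (hu n) hg'), ← relaxVal_neg, neg_sub,
    abs_of_nonneg (relaxVal_nonneg h)]
  linarith [(hN n hn).2]

variable (h) in
theorem relaxForm_le : FormLE (relaxForm h) h :=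
  ⟨dom_subset_relaxDom h, fun _ hf =>
    (relaxForm_Q h (dom_subset_relaxDom h hf)).trans_le (relaxVal_le_Q h hf)⟩

theorem FormLE.relaxSet_subset (hkh : FormLE k h) (f : α → ℝ) : relaxSet h f ⊆ relaxSet k f :=
  fun _ hc δ hδ => by
    obtain ⟨a, ha, hfa, hQa⟩ := hc δ hδ
    exact ⟨a, hkh.1 ha, hfa, (hkh.2 a ha).trans_lt hQa⟩

theorem FormLE.relaxDom_subset (hkh : FormLE k h) : relaxDom h ⊆ relaxDom k :=
  fun f hf => ⟨hf.1, hf.2.mono (hkh.relaxSet_subset f)⟩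

theorem FormLE.relaxVal_le (hkh : FormLE k h) (hx : x ∈ relaxDom h) :
    relaxVal k x ≤ relaxVal h x :=
  csInf_le_csInf (bddBelow_relaxSet k) hx.2 (hkh.relaxSet_subset x)

theorem QuadForm.isCore_dom (E : QuadForm α μ) : IsCore E E.dom :=
  ⟨subset_rfl, fun f hf ε hε => ⟨f, hf, by simpa [QuadForm.formNormSq, E.Q_zero] using hε⟩⟩

theorem IsCore.exists_tendsto {C : Set (α → ℝ)} (hC : IsCore E C) (hx : x ∈ E.dom) :
    ∃ c : ℕ → α → ℝ, (∀ n, c n ∈ C) ∧ Tendsto (fun n => E.Q (c n - x)) atTop (𝓝 0) ∧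
      Tendsto (fun n => eLpNorm (c n - x) 2 μ) atTop (𝓝 0) := by
  choose c hcC hc using fun n : ℕ => hC.2 x hx (1 / (n + 1)) Nat.one_div_pos_of_nat
  have hcE : ∀ n, c n ∈ E.dom := fun n => hC.1 (hcC n)
  have hδ := tendsto_one_div_add_atTop_nhds_zero_nat (𝕜 := ℝ)
  have hsq : ∀ n, E.Q (c n - x) + l2Norm μ (c n - x) ^ 2 < 1 / (n + 1) := fun n => by
    rw [E.Q_sub_comm (hcE n) hx, l2Norm_sub_comm]
    exact hc n
  refine ⟨c, hcC, squeeze_zero (fun n => E.Q_nonneg (E.sub_mem (hcE n) hx))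
    (fun n => by nlinarith [hsq n, sq_nonneg (l2Norm μ (c n - x))]) hδ,
    tendsto_eLpNorm_of_l2Norm (fun n => (E.dom_memLp _ (hcE n)).sub (E.dom_memLp x hx)) ?_⟩
  have hlim : Tendsto (fun n : ℕ => √(1 / ((n : ℝ) + 1))) atTop (𝓝 0) := by
    simpa using hδ.sqrt
  refine squeeze_zero (fun _ => ENNReal.toReal_nonneg) (fun n => Real.le_sqrt_of_sq_le ?_) hlim
  linarith [hsq n, E.Q_nonneg (E.sub_mem (hcE n) hx)]

theorem exists_mem_near_lt_relaxVal {C : Set (α → ℝ)} (hC : IsCore E C) (hx : x ∈ relaxDom E)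
    {δ : ℝ} (hδ : 0 < δ) : ∃ c ∈ C, l2Norm μ (x - c) < δ ∧ E.Q c < relaxVal E x + δ := by
  obtain ⟨a, ha, hxa, hQa⟩ := relaxVal_mem_relaxSet E hx.2 (δ / 2) (half_pos hδ)
  obtain ⟨c, hcC, hQc, hLc⟩ := hC.exists_tendsto ha
  have hQ := E.tendsto_Q (fun n => hC.1 (hcC n)) ha hQc
  obtain ⟨n, hn₁, hn₂⟩ := ((eventually_l2Norm_lt hLc (half_pos hδ)).and
    (hQ.eventually (gt_mem_nhds (show E.Q a < relaxVal E x + δ by linarith)))).exists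
  refine ⟨c n, hcC n, ?_, hn₂⟩
  have := l2Norm_sub_le hx.1 (E.dom_memLp a ha) (E.dom_memLp _ (hC.1 (hcC n)))
  rw [l2Norm_sub_comm a] at this
  linarith

structure IsRecoverySeq (E : QuadForm α μ) (x : α → ℝ) (a : ℕ → α → ℝ) : Prop where
  mem : ∀ n, a n ∈ E.dom
  tendsto_eLpNorm : Tendsto (fun n => eLpNorm (a n - x) 2 μ) atTop (𝓝 0)
  eventually_Q_lt : ∀ ε > 0, ∀ᶠ n in atTop, E.Q (a n) < relaxVal E x + ε

theorem exists_isRecoverySeq {C : Set (α → ℝ)} (hC : IsCore E C) (hx : x ∈ relaxDom E) :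
    ∃ a : ℕ → α → ℝ, (∀ n, a n ∈ C) ∧ IsRecoverySeq E x a := by
  choose a haC hxa hQa using fun n : ℕ =>
    exists_mem_near_lt_relaxVal hC hx (Nat.one_div_pos_of_nat (n := n))
  have hδ := tendsto_one_div_add_atTop_nhds_zero_nat (𝕜 := ℝ)
  refine ⟨a, haC, fun n => hC.1 (haC n), tendsto_eLpNorm_of_l2Norm
    (fun n => (E.dom_memLp _ (hC.1 (haC n))).sub hx.1)
    (squeeze_zero (fun _ => ENNReal.toReal_nonneg) (fun n => ?_) hδ), fun ε hε => ?_⟩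
  · rw [l2Norm_sub_comm]
    exact (hxa n).le
  · filter_upwards [hδ.eventually (gt_mem_nhds hε)] with n hn
    linarith [hQa n]

def FormCauchy (E : QuadForm α μ) (a : ℕ → α → ℝ) : Prop :=
  ∀ ε : ℝ, 0 < ε → ∃ N : ℕ, ∀ m ≥ N, ∀ n ≥ N, E.Q (a m - a n) < ε

/-- Midpoints of a recovery sequence also approximate `x`, so by lower semicontinuity of the
envelope and the parallelogram law its terms are close in form. -/
theorem IsRecoverySeq.formCauchy {a : ℕ → α → ℝ} (ha : IsRecoverySeq E x a)
    (hx : MemLp x 2 μ) : FormCauchy E a := by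
  intro ε hε
  obtain ⟨δ, hδ, hlsc⟩ := exists_relaxVal_le_Q_add E x (by positivity : 0 < ε / 8)
  have hnear : ∀ᶠ n in atTop, l2Norm μ (x - a n) < δ :=
    (eventually_l2Norm_lt ha.tendsto_eLpNorm hδ).mono fun n hn => by rwa [l2Norm_sub_comm]
  obtain ⟨N, hN⟩ := eventually_atTop.1 (hnear.and (ha.eventually_Q_lt (ε / 8) (by positivity)))
  refine ⟨N, fun m hm n hn => ?_⟩
  obtain ⟨hxm, hQm⟩ := hN m hm
  obtain ⟨hxn, hQn⟩ := hN n hn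
  have hsum := E.add_mem _ (ha.mem m) _ (ha.mem n)
  have hmid : l2Norm μ (x - (1 / 2 : ℝ) • (a m + a n)) < δ := by
    have e : x - (1 / 2 : ℝ) • (a m + a n) = (1 / 2 : ℝ) • ((x - a m) + (x - a n)) := by
      ext t
      simp only [Pi.sub_apply, Pi.smul_apply, Pi.add_apply, smul_eq_mul]
      ring
    have := l2Norm_add_le (hx.sub (E.dom_memLp _ (ha.mem m))) (hx.sub (E.dom_memLp _ (ha.mem n)))
    rw [e, l2Norm_smul, abs_of_pos (by norm_num : (0 : ℝ) < 1 / 2)]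
    linarith
  have := hlsc _ (E.smul_mem _ _ hsum) hmid
  rw [E.Q_smul _ hsum] at this
  linarith [E.Q_add_add_Q_sub (ha.mem m) (ha.mem n)]

theorem Closed.mem_dom_and_Q_le_relaxVal (hE : Closed E) (hx : x ∈ relaxDom E) :
    x ∈ E.dom ∧ E.Q x ≤ relaxVal E x := by
  obtain ⟨a, -, ha⟩ := exists_isRecoverySeq E.isCore_dom hx
  obtain ⟨hxE, hQ⟩ := hE a x ha.mem hx.1 ha.tendsto_eLpNorm (ha.formCauchy hx.1)
  refine ⟨hxE, _root_.le_of_forall_pos_le_add fun ε hε => ?_⟩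
  exact le_of_tendsto (E.tendsto_Q ha.mem hxE hQ)
    ((ha.eventually_Q_lt ε hε).mono fun _ hn => hn.le)

theorem IsRelaxation.formLE_relaxForm {h₀ : QuadForm α μ} (hrel : IsRelaxation h h₀) :
    FormLE (relaxForm h) h₀ :=
  hrel.2.2 _ (relaxForm_closed h) (relaxForm_le h)

theorem IsRelaxation.dom_eq {h₀ : QuadForm α μ} (hrel : IsRelaxation h h₀) :
    h₀.dom = relaxDom h :=
  hrel.formLE_relaxForm.1.antisymm fun _ hf =>
    (hrel.1.mem_dom_and_Q_le_relaxVal (hrel.2.1.relaxDom_subset hf)).1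

theorem IsRelaxation.Q_eq {h₀ : QuadForm α μ} (hrel : IsRelaxation h h₀) (hx : x ∈ h₀.dom) :
    h₀.Q x = relaxVal h x := by
  have hxh : x ∈ relaxDom h := hrel.dom_eq ▸ hx
  refine le_antisymm ?_ ((relaxForm_Q h hxh).symm.trans_le (hrel.formLE_relaxForm.2 x hx))
  calc h₀.Q x ≤ relaxVal h₀ x :=
        (hrel.1.mem_dom_and_Q_le_relaxVal (dom_subset_relaxDom h₀ hx)).2
    _ ≤ relaxVal h x := hrel.2.1.relaxVal_le hxh

end Relaxation

section Cores

variable {α : Type*} [MeasurableSpace α] {μ : Measure α} {h h₀ E k : QuadForm α μ}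
  {C : Set (α → ℝ)}

theorem IsCore.mono {S : Set (α → ℝ)} (hC : IsCore E C) (hCS : C ⊆ S) (hS : S ⊆ E.dom) :
    IsCore E S :=
  ⟨hS, fun f hf ε hε => (hC.2 f hf ε hε).imp fun _ ⟨hg, hlt⟩ => ⟨hCS hg, hlt⟩⟩

theorem formCauchy_of_tendsto {a : ℕ → α → ℝ} {x : α → ℝ} (ha : ∀ n, a n ∈ E.dom)
    (hx : x ∈ E.dom) (h : Tendsto (fun n => E.Q (a n - x)) atTop (𝓝 0)) : FormCauchy E a := by
  intro ε hε
  obtain ⟨N, hN⟩ := eventually_atTop.1 (h.eventually (gt_mem_nhds (by positivity : 0 < ε / 4)))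
  refine ⟨N, fun m hm n hn => ?_⟩
  have := E.Q_add_le (E.sub_mem (ha m) hx) (E.sub_mem hx (ha n))
  rw [sub_add_sub_cancel, E.Q_sub_comm hx (ha n)] at this
  linarith [hN m hm, hN n hn]

theorem FormCauchy.of_le {a : ℕ → α → ℝ} {c : ℝ} (hc : 0 ≤ c) (ha : FormCauchy E a)
    (hle : ∀ m n, k.Q (a m - a n) ≤ c * E.Q (a m - a n)) : FormCauchy k a := by
  intro ε hε
  obtain ⟨N, hN⟩ := ha (ε / (c + 1)) (by positivity)
  refine ⟨N, fun m hm n hn => (hle m n).trans_lt ?_⟩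
  calc c * E.Q (a m - a n) ≤ c * (ε / (c + 1)) := by gcongr; exact (hN m hm n hn).le
    _ < (c + 1) * (ε / (c + 1)) := by gcongr; linarith
    _ = ε := mul_div_cancel₀ _ (by positivity)

theorem IsRelaxation.isCore (hrel : IsRelaxation h h₀) (hC : IsCore h C) : IsCore h₀ C := by
  refine ⟨hC.1.trans hrel.2.1.1, fun f hf ε hε => ?_⟩
  obtain ⟨a, haC, ha⟩ := exists_isRecoverySeq hC (hrel.dom_eq ▸ hf)
  have hCauchy : FormCauchy h₀ a := (ha.formCauchy (h₀.dom_memLp f hf)).of_le zero_le_one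
    fun m n => by simpa using hrel.2.1.2 _ (h.sub_mem (ha.mem m) (ha.mem n))
  obtain ⟨-, hQ⟩ := hrel.1 a f (fun n => hrel.2.1.1 (ha.mem n)) (h₀.dom_memLp f hf)
    ha.tendsto_eLpNorm hCauchy
  obtain ⟨n, hQn, hLn⟩ := ((hQ.eventually (gt_mem_nhds (half_pos hε))).and
    (eventually_l2Norm_lt ha.tendsto_eLpNorm (Real.sqrt_pos.2 (half_pos hε)))).exists
  refine ⟨a n, haC n, ?_⟩
  have hL : l2Norm μ (a n - f) ^ 2 < ε / 2 := (Real.lt_sqrt ENNReal.toReal_nonneg).1 hLn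
  change h₀.Q (f - a n) + l2Norm μ (f - a n) ^ 2 < ε
  rw [h₀.Q_sub_comm hf (hrel.2.1.1 (ha.mem n)), l2Norm_sub_comm]
  linarith

theorem lipschitzWith_one_of_increment_le {F : ℝ → ℝ}
    (hF : ∀ s t : ℝ, s ≤ t → 0 ≤ F t - F s ∧ F t - F s ≤ t - s) : LipschitzWith 1 F := by
  refine LipschitzWith.of_dist_le_mul fun s t => ?_
  rw [NNReal.coe_one, one_mul, Real.dist_eq, Real.dist_eq]
  rcases le_total s t with hst | hts
  · rw [abs_sub_comm, abs_of_nonneg (hF s t hst).1, abs_sub_comm, abs_of_nonneg (sub_nonneg.2 hst)]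
    exact (hF s t hst).2
  · rw [abs_of_nonneg (hF t s hts).1, abs_of_nonneg (sub_nonneg.2 hts)]
    exact (hF t s hts).2

theorem IsRelaxation.markovian (hrel : IsRelaxation h h₀) (hC : IsCore h C)
    (hM : MarkovianOn h C) : Markovian h₀ := by
  intro ε hε
  obtain ⟨F, hFid, hFbd, hFmono, hFC⟩ := hM ε hε
  refine ⟨F, hFid, hFbd, hFmono, fun f hf => ?_⟩
  have hF := lipschitzWith_one_of_increment_le hFmono
  have hfh : f ∈ relaxDom h := hrel.dom_eq ▸ hf
  obtain ⟨a, haC, ha⟩ := exists_isRecoverySeq hC hfh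
  have hFa : ∀ n, F ∘ a n ∈ h.dom := fun n => hC.1 (hFC _ (haC n)).1
  obtain ⟨hFf, hval⟩ := relaxVal_le_of_tendsto (fun n => dom_subset_relaxDom h (hFa n))
    (hF.comp_memLp (hFid 0 ⟨le_rfl, zero_le_one⟩) hfh.1)
    (tendsto_of_tendsto_of_tendsto_of_le_of_le tendsto_const_nhds ha.tendsto_eLpNorm
      (fun _ => zero_le) fun n => eLpNorm_mono fun x => by
        simpa using hF.norm_sub_le (a n x) (f x))
    fun δ hδ => (ha.eventually_Q_lt δ hδ).mono fun n hn =>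
      ((relaxVal_le_Q h (hFa n)).trans (hFC _ (haC n)).2).trans_lt hn
  have hFf₀ : F ∘ f ∈ h₀.dom := hrel.dom_eq ▸ hFf
  exact ⟨hFf₀, by rw [hrel.Q_eq hf, hrel.Q_eq hFf₀]; exact hval⟩

theorem Closed.mem_dom_and_Q_le_of_isCore (hk : Closed k) {S : Set (α → ℝ)} (hS : IsCore E S)
    (hsub : ∀ f ∈ S, ∀ g ∈ S, f - g ∈ S) (hSk : S ⊆ k.dom) {c : ℝ} (hc : 0 ≤ c)
    (hle : ∀ f ∈ S, k.Q f ≤ c * E.Q f) {x : α → ℝ} (hx : x ∈ E.dom) :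
    x ∈ k.dom ∧ k.Q x ≤ c * E.Q x := by
  obtain ⟨s, hsS, hQ, hL⟩ := hS.exists_tendsto hx
  have hsE : ∀ n, s n ∈ E.dom := fun n => hS.1 (hsS n)
  have hCauchy : FormCauchy k s := (formCauchy_of_tendsto hsE hx hQ).of_le hc
    fun m n => hle _ (hsub _ (hsS m) _ (hsS n))
  obtain ⟨hxk, hkQ⟩ := hk s x (fun n => hSk (hsS n)) (E.dom_memLp x hx) hL hCauchy
  exact ⟨hxk, le_of_tendsto_of_tendsto' (k.tendsto_Q (fun n => hSk (hsS n)) hxk hkQ)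
    ((E.tendsto_Q hsE hx hQ).const_mul c) fun n => hle _ (hsS n)⟩

theorem IsCore.of_le {D : Set (α → ℝ)} (hD : IsCore k D) (hDE : D ⊆ E.dom) {c : ℝ}
    (hc : 0 ≤ c) (hEk : ∀ f ∈ E.dom, f ∈ k.dom ∧ k.Q f ≤ c * E.Q f) (hC : IsCore E C) :
    IsCore k C := by
  refine ⟨fun f hf => (hEk f (hC.1 hf)).1, fun f hf ε hε => ?_⟩
  obtain ⟨d, hdD, hfd⟩ := hD.2 f hf (ε / 4) (by positivity)
  obtain ⟨g, hgC, hdg⟩ := hC.2 d (hDE hdD) (ε / (4 * (c + 1))) (by positivity)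
  have hdgE := E.sub_mem (hDE hdD) (hC.1 hgC)
  have hdgk : k.formNormSq (d - g) < ε / 4 := by
    change E.Q (d - g) + l2Norm μ (d - g) ^ 2 < ε / (4 * (c + 1)) at hdg
    change k.Q (d - g) + l2Norm μ (d - g) ^ 2 < ε / 4
    have hscaled : (c + 1) * (E.Q (d - g) + l2Norm μ (d - g) ^ 2) < ε / 4 :=
      calc _ < (c + 1) * (ε / (4 * (c + 1))) := by gcongr
        _ = ε / 4 := by field_simp
    nlinarith [(hEk _ hdgE).2, E.Q_nonneg hdgE, sq_nonneg (l2Norm μ (d - g))]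
  refine ⟨g, hgC, ?_⟩
  have := k.formNormSq_add_le (k.sub_mem hf (hD.1 hdD)) (hEk _ hdgE).1
  rw [sub_add_sub_cancel] at this
  linarith

theorem QuadForm.sub_mem_Adom {f g : α → ℝ} (hf : f ∈ E.Adom) (hg : g ∈ E.Adom) :
    f - g ∈ E.Adom := by
  obtain ⟨hfE, Cf, hCf⟩ := hf
  obtain ⟨hgE, Cg, hCg⟩ := hg
  refine ⟨E.sub_mem hfE hgE, Cf + Cg, ?_⟩
  filter_upwards [hCf, hCg] with x hx hy
  exact (abs_sub _ _).trans (add_le_add hx hy)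

end Cores

theorem memLinf_of_continuous_of_hasCompactSupport {α : Type*} [TopologicalSpace α]
    [MeasurableSpace α] {μ : Measure α} {f : α → ℝ} (hf : Continuous f)
    (hs : HasCompactSupport f) : MemLinf μ f := by
  obtain ⟨C, hC⟩ := hs.exists_bound_of_continuous hf
  exact ⟨C, ae_of_all μ fun x => by simpa using hC x⟩

variable {X : Type*} [MetricSpace X] [MeasurableSpace X] [BorelSpace X]
  [ConnectedSpace X] [LocallyCompactSpace X] [TopologicalSpace.SeparableSpace X]

theorem relaxation_regular_dirichlet_general
    (μ : Measure X)
    (l : QuadForm X μ) (hl : IsDiffusion l)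
    (h h₀ : QuadForm X μ) (hCl : MemCl l h) (hrel : IsRelaxation h h₀) :
    Closed h₀ ∧ Markovian h₀ ∧ Regular h₀ ∧ l.dom ⊆ h₀.dom ∧
      ∀ C : Set (X → ℝ), IsCore l C → IsCore h₀ C := by
  obtain ⟨-, -, ⟨C₀, hC₀cont, hC₀core, hC₀dense⟩, -⟩ := hl
  obtain ⟨hAh, ⟨lam, hlam, hlamQ⟩, hAdense, -, hMark⟩ := hCl
  have hAcore : IsCore h l.Adom := ⟨hAh, hAdense⟩
  have hAcore_l : IsCore l l.Adom := hC₀core.mono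
    (fun f hf => ⟨hC₀core.1 hf,
      memLinf_of_continuous_of_hasCompactSupport (hC₀cont f hf).1 (hC₀cont f hf).2⟩)
    fun _ hf => hf.1
  have hl₀ : ∀ f ∈ l.dom, f ∈ h₀.dom ∧ h₀.Q f ≤ lam * l.Q f := fun f hf =>
    hrel.1.mem_dom_and_Q_le_of_isCore hAcore_l (fun _ hf _ hg => l.sub_mem_Adom hf hg)
      (hAh.trans hrel.2.1.1) hlam.le (fun f hf => (hrel.2.1.2 f (hAh hf)).trans (hlamQ f hf)) hf
  have hcore : ∀ C, IsCore l C → IsCore h₀ C := fun C hC =>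
    (hrel.isCore hAcore).of_le (fun _ hf => hf.1) hlam.le hl₀ hC
  exact ⟨hrel.1, hrel.markovian hAcore hMark, ⟨C₀, hC₀cont, hcore C₀ hC₀core, hC₀dense⟩,
    fun f hf => (hl₀ f hf).1, hcore⟩

/-- Lemma 3.7: if `h ∈ C_l` then the relaxation `h₀` of `h` is a regular Dirichlet form
with `D(l) ⊆ D(h₀)`, and every core for `l` is a core for `h₀`. -/
theorem relaxation_regular_dirichlet
    (μ : Measure X) [μ.Regular] [μ.IsOpenPosMeasure]
    (l : QuadForm X μ) (hl : IsDiffusion l)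
    (h h₀ : QuadForm X μ) (hCl : MemCl l h) (hrel : IsRelaxation h h₀) :
    Closed h₀ ∧ Markovian h₀ ∧ Regular h₀ ∧ l.dom ⊆ h₀.dom ∧
      ∀ C : Set (X → ℝ), IsCore l C → IsCore h₀ C :=
  relaxation_regular_dirichlet_general μ l hl h h₀ hCl hrel

end SmallTime
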